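/- For y → +∞, ∫_ℝ H_{0,1}(x)⁴ H_{0,1}'(x) H_{-1,0}(x+y) dx = -e^{-√2 y}(2/15 + o(1)). -/

import Mathlib

/-!
Write `s(κ, x) = (1 + e^{2κx})^{-1/2}`, so that `H01 x = e^{√2x} s(√2, x)` and
`Hm10 t = -e^{-√2t} s(-√2, t)`. After dividing by `e^{-√2y}` the integral becomes
`-∫ √2 e^{4√2x} s(√2, x)^7 s(-√2, x+y) dx`; since `s(-√2, ·) → 1` at `+∞` and is bounded by `1`,
dominated convergence sends it to `-∫ √2 e^{4√2x} s(√2, x)^7 dx`. The integrand is the derivative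
of `s^5/5 - s^3/3`, which runs from `1/5 - 1/3` at `-∞` to `0` at `+∞`.
-/

open Real MeasureTheory Filter Topology

noncomputable def H01 : ℝ → ℝ := fun x => Real.exp (Real.sqrt 2 * x) / Real.sqrt (1 + Real.exp (2 * Real.sqrt 2 * x))

noncomputable def Hm10 : ℝ → ℝ := fun x => -(Real.exp (-(Real.sqrt 2) * x) / Real.sqrt (1 + Real.exp (-(2 * Real.sqrt 2) * x)))

theorem integrable_deriv_of_nonneg_of_tendsto {g g' : ℝ → ℝ} {m n : ℝ}
    (hderiv : ∀ x, HasDerivAt g (g' x) x) (hg' : ∀ x, 0 ≤ g' x)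
    (hbot : Tendsto g atBot (𝓝 m)) (htop : Tendsto g atTop (𝓝 n)) : Integrable g' := by
  have hcont : Continuous g := continuous_iff_continuousAt.2 fun x => (hderiv x).continuousAt
  have hnorm : ∀ a b, ∫ x in a..b, ‖g' x‖ = g b - g a := fun a b => by
    simp_rw [Real.norm_of_nonneg (hg' _)]
    exact intervalIntegral.integral_eq_sub_of_hasDerivAt (fun x _ => hderiv x)
      (intervalIntegral.intervalIntegrable_deriv_of_nonneg hcont.continuousOn
        (fun x _ => hderiv x) fun x _ => hg' x)
  refine integrable_of_intervalIntegral_norm_tendsto (n - m)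
    (fun i => intervalIntegral.integrableOn_deriv_of_nonneg hcont.continuousOn
      (fun x _ => hderiv x) fun x _ => hg' x) tendsto_neg_atTop_atBot tendsto_id ?_
  simp_rw [hnorm]
  exact htop.sub (hbot.comp tendsto_neg_atTop_atBot)

theorem tendsto_integral_mul_comp_add_atTop {f φ : ℝ → ℝ} {C L : ℝ} (hf : Integrable f)
    (hφm : Measurable φ) (hφC : ∀ t, ‖φ t‖ ≤ C) (hφ : Tendsto φ atTop (𝓝 L)) :
    Tendsto (fun y => ∫ x, f x * φ (x + y)) atTop (𝓝 (∫ x, f x * L)) := by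
  refine tendsto_integral_filter_of_dominated_convergence (fun x => ‖f x‖ * C)
    (Eventually.of_forall fun y => hf.aestronglyMeasurable.mul
      (hφm.comp (measurable_add_const y)).aestronglyMeasurable)
    (Eventually.of_forall fun y => ae_of_all _ fun x => ?_) (hf.norm.mul_const C)
    (ae_of_all _ fun x => (hφ.comp (tendsto_atTop_add_const_left _ x tendsto_id)).const_mul (f x))
  rw [norm_mul]
  exact mul_le_mul_of_nonneg_left (hφC _) (norm_nonneg _)

noncomputable def invSqrtOneAddExp (κ x : ℝ) : ℝ := (Real.sqrt (1 + Real.exp (2 * κ * x)))⁻¹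

section invSqrtOneAddExp

local notation "s" => invSqrtOneAddExp

theorem exp_two_mul_mul (κ x : ℝ) : Real.exp (2 * κ * x) = Real.exp (κ * x) ^ 2 := by
  rw [sq, ← Real.exp_add]; ring_nf

theorem invSqrtOneAddExp_pos (κ x : ℝ) : 0 < s κ x := by
  unfold invSqrtOneAddExp; positivity

theorem norm_invSqrtOneAddExp_le_one (κ x : ℝ) : ‖s κ x‖ ≤ 1 := by
  rw [Real.norm_of_nonneg (invSqrtOneAddExp_pos κ x).le]
  exact inv_le_one_of_one_le₀ (Real.one_le_sqrt.2 (le_add_of_nonneg_right (Real.exp_pos _).le))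

theorem invSqrtOneAddExp_sq_mul (κ x : ℝ) : s κ x ^ 2 * (1 + Real.exp (κ * x) ^ 2) = 1 := by
  rw [invSqrtOneAddExp, inv_pow, Real.sq_sqrt (by positivity), exp_two_mul_mul]
  exact inv_mul_cancel₀ (by positivity)

theorem hasDerivAt_invSqrtOneAddExp (κ x : ℝ) :
    HasDerivAt (s κ) (-(κ * Real.exp (κ * x) ^ 2 * s κ x ^ 3)) x := by
  have hA : 0 < 1 + Real.exp (2 * κ * x) := by positivity
  have h := ((((hasDerivAt_id' x).const_mul (2 * κ)).exp.const_add 1).sqrt hA.ne').inv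
    (Real.sqrt_pos.2 hA).ne'
  refine h.congr_deriv ?_
  rw [invSqrtOneAddExp, ← exp_two_mul_mul]
  field_simp

theorem tendsto_invSqrtOneAddExp_nhds_one {κ : ℝ} {l : Filter ℝ}
    (h : Tendsto (fun x => 2 * κ * x) l atBot) : Tendsto (s κ) l (𝓝 1) := by
  have := ((Real.tendsto_exp_atBot.comp h).const_add 1).sqrt.inv₀ (by norm_num)
  simp only [Function.comp_def, add_zero, Real.sqrt_one, inv_one] at this
  exact this

theorem continuous_invSqrtOneAddExp (κ : ℝ) : Continuous (s κ) :=
  continuous_iff_continuousAt.2 fun x => (hasDerivAt_invSqrtOneAddExp κ x).continuousAt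

theorem tendsto_invSqrtOneAddExp_atTop {κ : ℝ} (hκ : 0 < κ) : Tendsto (s κ) atTop (𝓝 0) :=
  tendsto_inv_atTop_zero.comp <| Real.tendsto_sqrt_atTop.comp <| tendsto_atTop_add_const_left _ 1 <|
    Real.tendsto_exp_atTop.comp <| tendsto_id.const_mul_atTop (by positivity)

theorem hasDerivAt_exp_mul_invSqrtOneAddExp (κ x : ℝ) :
    HasDerivAt (fun x => Real.exp (κ * x) * s κ x) (κ * Real.exp (κ * x) * s κ x ^ 3) x := by
  have h := ((hasDerivAt_id' x).const_mul κ).exp.mul (hasDerivAt_invSqrtOneAddExp κ x)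
  refine h.congr_deriv ?_
  linear_combination (-(κ * Real.exp (κ * x) * s κ x)) * invSqrtOneAddExp_sq_mul κ x

noncomputable def interactionDensity (κ x : ℝ) : ℝ :=
  κ * Real.exp (κ * x) ^ 4 * invSqrtOneAddExp κ x ^ 7

noncomputable def interactionDensityPrimitive (κ x : ℝ) : ℝ :=
  invSqrtOneAddExp κ x ^ 5 / 5 - invSqrtOneAddExp κ x ^ 3 / 3

theorem hasDerivAt_interactionDensityPrimitive (κ x : ℝ) :
    HasDerivAt (interactionDensityPrimitive κ) (interactionDensity κ x) x := by
  have h := (((hasDerivAt_invSqrtOneAddExp κ x).pow 5).div_const 5).sub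
    (((hasDerivAt_invSqrtOneAddExp κ x).pow 3).div_const 3)
  refine h.congr_deriv ?_
  rw [interactionDensity]
  linear_combination (-(κ * Real.exp (κ * x) ^ 2 * s κ x ^ 5)) * invSqrtOneAddExp_sq_mul κ x

theorem tendsto_interactionDensityPrimitive_atBot {κ : ℝ} (hκ : 0 < κ) :
    Tendsto (interactionDensityPrimitive κ) atBot (𝓝 (-(2 / 15))) := by
  have h :=
    tendsto_invSqrtOneAddExp_nhds_one (tendsto_id.const_mul_atBot (by positivity : 0 < 2 * κ))
  convert ((h.pow 5).div_const 5).sub ((h.pow 3).div_const 3) using 2 <;>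
    norm_num [interactionDensityPrimitive]

theorem tendsto_interactionDensityPrimitive_atTop {κ : ℝ} (hκ : 0 < κ) :
    Tendsto (interactionDensityPrimitive κ) atTop (𝓝 0) := by
  have h := tendsto_invSqrtOneAddExp_atTop hκ
  convert ((h.pow 5).div_const 5).sub ((h.pow 3).div_const 3) using 2 <;>
    norm_num [interactionDensityPrimitive]

theorem interactionDensity_nonneg {κ : ℝ} (hκ : 0 ≤ κ) (x : ℝ) : 0 ≤ interactionDensity κ x := by
  have := invSqrtOneAddExp_pos κ x
  unfold interactionDensity
  positivity

theorem integrable_interactionDensity {κ : ℝ} (hκ : 0 < κ) : Integrable (interactionDensity κ) :=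
  integrable_deriv_of_nonneg_of_tendsto (hasDerivAt_interactionDensityPrimitive κ)
    (interactionDensity_nonneg hκ.le) (tendsto_interactionDensityPrimitive_atBot hκ)
    (tendsto_interactionDensityPrimitive_atTop hκ)

theorem integral_interactionDensity {κ : ℝ} (hκ : 0 < κ) :
    ∫ x, interactionDensity κ x = 2 / 15 := by
  rw [integral_of_hasDerivAt_of_tendsto (hasDerivAt_interactionDensityPrimitive κ)
    (integrable_interactionDensity hκ) (tendsto_interactionDensityPrimitive_atBot hκ)
    (tendsto_interactionDensityPrimitive_atTop hκ)]
  norm_num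

end invSqrtOneAddExp

theorem H01_eq : H01 = fun x => Real.exp (Real.sqrt 2 * x) * invSqrtOneAddExp (Real.sqrt 2) x :=
  funext fun _ => div_eq_mul_inv _ _

theorem Hm10_eq (t : ℝ) :
    Hm10 t = -(Real.exp (-(Real.sqrt 2) * t) * invSqrtOneAddExp (-(Real.sqrt 2)) t) := by
  simp only [Hm10, invSqrtOneAddExp, div_eq_mul_inv, mul_neg, neg_mul]

theorem H01_pow_four_mul_deriv_mul_Hm10 (x y : ℝ) :
    H01 x ^ 4 * deriv H01 x * Hm10 (x + y) = -(Real.exp (-(Real.sqrt 2) * y) *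
      (interactionDensity (Real.sqrt 2) x * invSqrtOneAddExp (-(Real.sqrt 2)) (x + y))) := by
  have hexp : Real.exp (-(Real.sqrt 2) * (x + y)) =
      Real.exp (-(Real.sqrt 2) * y) * (Real.exp (Real.sqrt 2 * x))⁻¹ := by
    rw [← Real.exp_neg, ← Real.exp_add]; ring_nf
  rw [H01_eq, (hasDerivAt_exp_mul_invSqrtOneAddExp _ x).deriv, Hm10_eq, hexp, interactionDensity]
  field_simp

theorem stmt17 :
    Tendsto (fun y : ℝ => (∫ x : ℝ, (H01 x)^4 * deriv H01 x * Hm10 (x + y)) / Real.exp (-(Real.sqrt 2) * y))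
      atTop (𝓝 (-(2/15))) := by
  have hκ : 0 < Real.sqrt 2 := Real.sqrt_pos.2 two_pos
  have hlim := tendsto_integral_mul_comp_add_atTop (integrable_interactionDensity hκ)
    (continuous_invSqrtOneAddExp (-(Real.sqrt 2))).measurable (norm_invSqrtOneAddExp_le_one _)
    (tendsto_invSqrtOneAddExp_nhds_one (tendsto_id.const_mul_atTop_of_neg (by linarith)))
  rw [integral_mul_const, integral_interactionDensity hκ, mul_one] at hlim
  refine hlim.neg.congr fun y => ?_
  simp_rw [H01_pow_four_mul_deriv_mul_Hm10, integral_neg, integral_const_mul]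
  field_simp
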